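/- Let α, γ > 0, x ∈ ℝ and y > 0. Then |e^{−πγy} − e^{−πα}| / (1 − e^{−π(γy+α)}) ≤ |B_{α,γ}(x+iy)| ≤ (e^{−πγy} + e^{−πα}) / (1 + e^{−π(γy+α)}), where |B_{α,γ}(x+iy)|² = (e^{−2πγy} + e^{−2πα} + 2e^{−π(γy+α)}cos(πγx)) / (1 + e^{−2π(γy+α)} + 2e^{−π(γy+α)}cos(πγx)). -/

import Mathlib

/-!
With `q = e^{iπγz}` and `v = e^{−πα}` we have `B_{α,γ}(z) = (q + v)/(1 + v q)`, a disk automorphism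
evaluated at `q`, and `|q| = e^{−πγy}`. For `a, b` in the closed unit disk,
`|1 + b̄ a|² = |a + b|² + K` with `K = (1 − |a|²)(1 − |b|²) ≥ 0`, so
`|(a + b)/(1 + b̄ a)|² = N/(N + K)` is increasing in `N = |a + b|²`. The triangle inequalities
`(|a| − |b|)² ≤ N ≤ (|a| + |b|)²` then give the two bounds, since `(1 ± |a||b|)² = (|a| ± |b|)² + K`.
-/

open Complex

/-- The function `B_{α,γ}(z) = (e^{iπγz} + e^{−πα})/(1 + e^{iπγz−πα})`. -/
noncomputable def Bag (α γ : ℝ) (z : ℂ) : ℂ :=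
  (Complex.exp (Complex.I * Real.pi * γ * z) + Complex.exp (-(Real.pi * α : ℝ))) /
    (1 + Complex.exp (Complex.I * Real.pi * γ * z - (Real.pi * α : ℝ)))

open ComplexConjugate

namespace Complex

variable {a b : ℂ}

theorem norm_one_add_conj_mul_sq (a b : ℂ) :
    ‖1 + conj b * a‖ ^ 2 = ‖a + b‖ ^ 2 + (1 - ‖a‖ ^ 2) * (1 - ‖b‖ ^ 2) := by
  simp only [Complex.sq_norm, normSq_apply, add_re, add_im, mul_re, mul_im, conj_re, conj_im,
    one_re, one_im]
  ring

theorem norm_add_div_one_add_conj_mul_sq (a b : ℂ) :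
    ‖(a + b) / (1 + conj b * a)‖ ^ 2 =
      (‖a‖ ^ 2 + ‖b‖ ^ 2 + 2 * (a * conj b).re) /
        (1 + ‖a‖ ^ 2 * ‖b‖ ^ 2 + 2 * (a * conj b).re) := by
  simp only [norm_div, div_pow, Complex.sq_norm, normSq_apply, add_re, add_im, mul_re, mul_im,
    conj_re, conj_im, one_re, one_im]
  ring

theorem one_sub_norm_sq_mul_one_sub_norm_sq_nonneg (ha : ‖a‖ ≤ 1) (hb : ‖b‖ ≤ 1) :
    0 ≤ (1 - ‖a‖ ^ 2) * (1 - ‖b‖ ^ 2) :=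
  mul_nonneg (sub_nonneg.2 (pow_le_one₀ (norm_nonneg a) ha))
    (sub_nonneg.2 (pow_le_one₀ (norm_nonneg b) hb))

theorem norm_add_div_one_add_conj_mul_le (ha : ‖a‖ ≤ 1) (hb : ‖b‖ ≤ 1) :
    ‖(a + b) / (1 + conj b * a)‖ ≤ (‖a‖ + ‖b‖) / (1 + ‖a‖ * ‖b‖) := by
  rcases (norm_nonneg (1 + conj b * a)).eq_or_lt with hd | hd
  · rw [norm_div, ← hd, div_zero]; positivity
  rw [norm_div, div_le_div_iff₀ hd (by positivity),
    ← pow_le_pow_iff_left₀ (by positivity) (by positivity) two_ne_zero, mul_pow, mul_pow,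
    norm_one_add_conj_mul_sq]
  have := mul_le_mul_of_nonneg_right (pow_le_pow_left₀ (norm_nonneg _) (norm_add_le a b) 2)
    (one_sub_norm_sq_mul_one_sub_norm_sq_nonneg ha hb)
  nlinarith

theorem abs_norm_sub_norm_div_le_norm_add_div_one_add_conj_mul (ha : ‖a‖ ≤ 1) (hb : ‖b‖ ≤ 1) :
    |‖a‖ - ‖b‖| / (1 - ‖a‖ * ‖b‖) ≤ ‖(a + b) / (1 + conj b * a)‖ := by
  rcases (mul_le_one₀ ha (norm_nonneg b) hb).eq_or_lt with h1 | h1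
  · rw [h1, sub_self, div_zero]; positivity
  have hd : 0 < ‖1 + conj b * a‖ := by
    have := norm_sub_norm_le (1 : ℂ) (-(conj b * a))
    simp only [norm_one, norm_neg, norm_mul, RCLike.norm_conj, sub_neg_eq_add] at this
    linarith
  have hn : |‖a‖ - ‖b‖| ≤ ‖a + b‖ := by
    simpa using abs_norm_sub_norm_le a (-b)
  rw [norm_div, div_le_div_iff₀ (by linarith) hd,
    ← pow_le_pow_iff_left₀ (by positivity) (by positivity) two_ne_zero, mul_pow, mul_pow,
    norm_one_add_conj_mul_sq, sq_abs]
  have := mul_le_mul_of_nonneg_right (pow_le_pow_left₀ (abs_nonneg _) hn 2)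
    (one_sub_norm_sq_mul_one_sub_norm_sq_nonneg ha hb)
  rw [sq_abs] at this
  nlinarith

theorem norm_exp_I_mul_pi_mul (γ x y : ℝ) :
    ‖exp (I * Real.pi * γ * (x + y * I))‖ = Real.exp (-(Real.pi * γ * y)) := by
  rw [norm_exp]; simp

theorem re_exp_I_mul_pi_mul (γ x y : ℝ) :
    (exp (I * Real.pi * γ * (x + y * I))).re =
      Real.exp (-(Real.pi * γ * y)) * Real.cos (Real.pi * γ * x) := by
  rw [exp_re]; simp

end Complex

theorem Bag_eq_div_one_add_conj_mul (α γ : ℝ) (z : ℂ) :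
    Bag α γ z = (exp (I * Real.pi * γ * z) + (Real.exp (-(Real.pi * α)) : ℂ)) /
      (1 + conj (Real.exp (-(Real.pi * α)) : ℂ) * exp (I * Real.pi * γ * z)) := by
  rw [Bag, conj_ofReal, ofReal_exp, sub_eq_neg_add, exp_add, ofReal_neg]

theorem Bag_modulus_bounds (α γ : ℝ) (hα : 0 < α) (hγ : 0 < γ) (x y : ℝ) (hy : 0 < y) :
    |Real.exp (-(Real.pi * γ * y)) - Real.exp (-(Real.pi * α))| /
        (1 - Real.exp (-(Real.pi * (γ * y + α)))) ≤
      ‖Bag α γ ((x : ℂ) + (y : ℂ) * Complex.I)‖ ∧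
    ‖Bag α γ ((x : ℂ) + (y : ℂ) * Complex.I)‖ ≤
      (Real.exp (-(Real.pi * γ * y)) + Real.exp (-(Real.pi * α))) /
        (1 + Real.exp (-(Real.pi * (γ * y + α)))) ∧
    (‖Bag α γ ((x : ℂ) + (y : ℂ) * Complex.I)‖) ^ 2 =
      (Real.exp (-(2 * Real.pi * γ * y)) + Real.exp (-(2 * Real.pi * α)) +
          2 * Real.exp (-(Real.pi * (γ * y + α))) * Real.cos (Real.pi * γ * x)) /
        (1 + Real.exp (-(2 * Real.pi * (γ * y + α))) +
          2 * Real.exp (-(Real.pi * (γ * y + α))) * Real.cos (Real.pi * γ * x)) := by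
  have hq := norm_exp_I_mul_pi_mul γ x y
  have hv : ‖(Real.exp (-(Real.pi * α)) : ℂ)‖ = Real.exp (-(Real.pi * α)) := by
    rw [norm_real, Real.norm_of_nonneg (Real.exp_nonneg _)]
  have hq1 : ‖exp (I * Real.pi * γ * (x + y * I))‖ ≤ 1 := by
    rw [hq, Real.exp_le_one_iff, neg_nonpos]; positivity
  have hv1 : ‖(Real.exp (-(Real.pi * α)) : ℂ)‖ ≤ 1 := by
    rw [hv, Real.exp_le_one_iff, neg_nonpos]; positivity
  have hprod : Real.exp (-(Real.pi * (γ * y + α))) =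
      Real.exp (-(Real.pi * γ * y)) * Real.exp (-(Real.pi * α)) := by
    rw [← Real.exp_add]; ring_nf
  have hexp_two_mul (s t : ℝ) (h : s = 2 * t) : Real.exp (-s) = Real.exp (-t) ^ 2 := by
    rw [h, ← Real.exp_nat_mul]; push_cast; ring_nf
  rw [Bag_eq_div_one_add_conj_mul]
  refine ⟨?_, ?_, ?_⟩
  · simpa only [hq, hv, hprod] using abs_norm_sub_norm_div_le_norm_add_div_one_add_conj_mul hq1 hv1
  · simpa only [hq, hv, hprod] using norm_add_div_one_add_conj_mul_le hq1 hv1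
  · rw [norm_add_div_one_add_conj_mul_sq, hq, hv, conj_ofReal, re_mul_ofReal, re_exp_I_mul_pi_mul,
      hexp_two_mul (2 * Real.pi * γ * y) (Real.pi * γ * y) (by ring),
      hexp_two_mul (2 * Real.pi * α) (Real.pi * α) (by ring),
      hexp_two_mul (2 * Real.pi * (γ * y + α)) (Real.pi * (γ * y + α)) (by ring), hprod]
    ring
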